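/- arXiv:1911.01040 — 3 statements merged into one kernel-verified Lean document; each statement's English description precedes it below -/
import Mathlib

section
/- Let Σ, Σ' be p×p symmetric matrices and S ⊆ {1,...,p}. Suppose Σ is (φ₀, S)-compatible, i.e. for every vector v with ‖v_{S^c}‖₁ ≤ 3‖v_S‖₁ one has |S|·⟨v, Σv⟩ ≥ φ₀‖v‖₁². If the entrywise max-norm satisfies ‖Σ' − Σ‖_∞ ≤ φ₀/(32|S|), then Σ' is (φ₀/2, S)-compatible. -/
/-!
An entrywise perturbation of size `c` changes the quadratic form `v ⬝ᵥ A *ᵥ v` by at most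
`c ‖v‖₁²`. With `c = φ₀ / (32 |S|)` this costs at most `φ₀ ‖v‖₁² / 32` after multiplying by `|S|`,
so the compatibility constant drops from `φ₀` to `31 φ₀ / 32 ≥ φ₀ / 2`.
-/

open Finset Matrix

/-- `(φ, S)`-compatibility of a symmetric matrix. -/
def IsCompatible {p : ℕ} (A : Matrix (Fin p) (Fin p) ℝ) (φ : ℝ) (S : Finset (Fin p)) : Prop :=
  ∀ v : Fin p → ℝ, (∑ i ∈ Sᶜ, |v i|) ≤ 3 * ∑ i ∈ S, |v i| →
    φ * (∑ i, |v i|) ^ 2 ≤ (S.card : ℝ) * (v ⬝ᵥ A.mulVec v)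

theorem abs_dotProduct_mulVec_le {n : Type*} [Fintype n] (M : Matrix n n ℝ) {c : ℝ}
    (hM : ∀ i j, |M i j| ≤ c) (u v : n → ℝ) :
    |u ⬝ᵥ M *ᵥ v| ≤ c * (∑ i, |u i|) * ∑ j, |v j| := by
  calc |u ⬝ᵥ M *ᵥ v| = |∑ i, ∑ j, u i * M i j * v j| := by
        simp only [dotProduct, mulVec, Finset.mul_sum, mul_assoc]
    _ ≤ ∑ i, ∑ j, |u i * M i j * v j| :=
        (abs_sum_le_sum_abs _ _).trans (sum_le_sum fun i _ => abs_sum_le_sum_abs _ _)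
    _ ≤ ∑ i, ∑ j, |u i| * c * |v j| := by
        gcongr with i _ j _
        rw [abs_mul, abs_mul]
        gcongr
        exact hM i j
    _ = c * (∑ i, |u i|) * ∑ j, |v j| := by
        simp only [← Finset.mul_sum, ← Finset.sum_mul]
        ring

theorem dotProduct_mulVec_ge_of_abs_sub_le {n : Type*} [Fintype n] {A B : Matrix n n ℝ} {c : ℝ}
    (h : ∀ i j, |A i j - B i j| ≤ c) (v : n → ℝ) :
    v ⬝ᵥ B *ᵥ v - c * (∑ i, |v i|) ^ 2 ≤ v ⬝ᵥ A *ᵥ v := by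
  have hAB := abs_dotProduct_mulVec_le (A - B) h v v
  rw [sub_mulVec, dotProduct_sub] at hAB
  nlinarith [(abs_le.mp hAB).1]

theorem stmt_0_general {p : ℕ} (Sig Sig' : Matrix (Fin p) (Fin p) ℝ)
    (φ₀ : ℝ) (hφ : 0 < φ₀) (S : Finset (Fin p))
    (hcompat : IsCompatible Sig φ₀ S)
    (hclose : ∀ i j, |Sig' i j - Sig i j| ≤ φ₀ / (32 * S.card)) :
    IsCompatible Sig' (φ₀ / 2) S := by
  intro v hv
  set N := ∑ i, |v i|
  have hcard : (S.card : ℝ) * (φ₀ / (32 * S.card)) ≤ φ₀ / 32 := by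
    -- for `S = ∅` the left side is `0` (division by zero), not `φ₀ / 32`
    rcases (S.card.cast_nonneg : (0 : ℝ) ≤ S.card).eq_or_lt with h0 | hpos
    · rw [← h0, zero_mul]; positivity
    · exact (by field_simp : (S.card : ℝ) * (φ₀ / (32 * S.card)) = φ₀ / 32).le
  have hperturb := dotProduct_mulVec_ge_of_abs_sub_le hclose v
  have hSig := hcompat v hv
  have hN : 0 ≤ φ₀ * N ^ 2 := by positivity
  calc φ₀ / 2 * N ^ 2 ≤ φ₀ * N ^ 2 - φ₀ / 32 * N ^ 2 := by linarith
    _ ≤ S.card * (v ⬝ᵥ Sig *ᵥ v) - S.card * (φ₀ / (32 * S.card)) * N ^ 2 := by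
        gcongr
    _ ≤ S.card * (v ⬝ᵥ Sig' *ᵥ v) := by
        rw [mul_assoc, ← mul_sub]
        gcongr

theorem stmt_0 {p : ℕ} (Sig Sig' : Matrix (Fin p) (Fin p) ℝ)
    (hSig : Sig.IsSymm) (hSig' : Sig'.IsSymm)
    (φ₀ : ℝ) (hφ : 0 < φ₀) (S : Finset (Fin p)) (hS : S.Nonempty)
    (hcompat : IsCompatible Sig φ₀ S)
    (hclose : ∀ i j, |Sig' i j - Sig i j| ≤ φ₀ / (32 * S.card)) :
    IsCompatible Sig' (φ₀ / 2) S :=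
  stmt_0_general Sig Sig' φ₀ hφ S hcompat hclose
end

section
/- Fix μ ∈ (0,1), L > 0 and a standard basis vector e_a ∈ ℝ^p. Let Σ be a positive definite p×p matrix with ‖Σ^{−1}‖₁ ≤ L (maximum column ℓ₁ norm). Then the value f(Σ) = min{ mᵀΣm : ‖Σm − e_a‖_∞ ≤ μ, ‖m‖₁ ≤ L } satisfies (1−μ)²/λ_max(Σ) ≤ f(Σ) ≤ 1/λ_min(Σ). -/
/-! A feasible `m` has `(Σ m)_a ≥ 1 - μ`, and Cauchy–Schwarz for the inner product
`⟨x, y⟩ = xᵀ Σ y` bounds `(Σ m)_a² = ⟨e_a, m⟩²` by `Σ_aa · mᵀ Σ m ≤ λ_max · mᵀ Σ m`.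
Conversely `m₀ = Σ⁻¹ e_a` is feasible with value `(Σ⁻¹)_aa`, and
`λ_min (Σ⁻¹)_aa² ≤ λ_min ‖m₀‖² ≤ m₀ᵀ Σ m₀ = (Σ⁻¹)_aa` gives `(Σ⁻¹)_aa ≤ 1 / λ_min`. -/

open Finset Matrix

/-- `f(Σ) = min { mᵀΣm : ‖Σm − e_a‖_∞ ≤ μ, ‖m‖₁ ≤ L }`. -/
noncomputable def fval {p : ℕ} (A : Matrix (Fin p) (Fin p) ℝ) (μ L : ℝ) (a : Fin p) : ℝ :=
  sInf { v : ℝ | ∃ m : Fin p → ℝ,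
    (∀ i, |A.mulVec m i - (if i = a then (1 : ℝ) else 0)| ≤ μ) ∧ (∑ i, |m i|) ≤ L ∧
    v = m ⬝ᵥ A.mulVec m }

namespace Matrix

variable {n : Type*} [Fintype n] [DecidableEq n] {A : Matrix n n ℝ}

theorem PosSemidef.sq_dotProduct_mulVec_le (hA : A.PosSemidef) (x y : n → ℝ) :
    (x ⬝ᵥ A *ᵥ y) ^ 2 ≤ (x ⬝ᵥ A *ᵥ x) * (y ⬝ᵥ A *ᵥ y) := by
  simp only [← toBilin'_apply']
  refine LinearMap.BilinForm.apply_sq_le_of_symm _ (fun v => ?_)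
    (LinearMap.BilinForm.isSymm_iff.mp
      (isSymm_toBilin'_iff_isSymm.mpr (isHermitian_iff_isSymm.mp hA.isHermitian))) x y
  simpa [toBilin'_apply'] using hA.dotProduct_mulVec_nonneg v

theorem PosSemidef.sq_mulVec_apply_le (hA : A.PosSemidef) (m : n → ℝ) (i : n) :
    (A *ᵥ m) i ^ 2 ≤ A i i * (m ⬝ᵥ A *ᵥ m) := by
  simpa using hA.sq_dotProduct_mulVec_le (Pi.single i 1) m

theorem mulVec_inv_mulVec (hA : IsUnit A.det) (v : n → ℝ) : A *ᵥ (A⁻¹ *ᵥ v) = v := by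
  rw [mulVec_mulVec, mul_nonsing_inv A hA, one_mulVec]

theorem inv_mulVec_single_one_dotProduct_mulVec (hA : IsUnit A.det) (i : n) :
    A⁻¹ *ᵥ Pi.single i 1 ⬝ᵥ A *ᵥ (A⁻¹ *ᵥ Pi.single i 1) = A⁻¹ i i := by
  rw [mulVec_inv_mulVec hA, dotProduct_single_one]
  simp

theorem inv_apply_self_le_one_div {lmin : ℝ} (hA : IsUnit A.det) (hlmin_pos : 0 < lmin)
    (hlmin : ∀ v : n → ℝ, lmin * ∑ i, v i ^ 2 ≤ v ⬝ᵥ A *ᵥ v) (i : n) :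
    A⁻¹ i i ≤ 1 / lmin := by
  set m := A⁻¹ *ᵥ Pi.single i 1
  have hmi : m i = A⁻¹ i i := by simp [m]
  have hq : lmin * A⁻¹ i i ^ 2 ≤ A⁻¹ i i := calc
    lmin * A⁻¹ i i ^ 2 ≤ lmin * ∑ j, m j ^ 2 := by
      rw [← hmi]
      exact mul_le_mul_of_nonneg_left
        (single_le_sum (fun j _ => sq_nonneg (m j)) (mem_univ i)) hlmin_pos.le
    _ ≤ A⁻¹ i i := inv_mulVec_single_one_dotProduct_mulVec hA i ▸ hlmin m
  rw [le_div_iff₀ hlmin_pos]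
  nlinarith

end Matrix

section Feasibility

variable {p : ℕ} (A : Matrix (Fin p) (Fin p) ℝ) (μ L : ℝ) (a : Fin p)

def IsFeasible (m : Fin p → ℝ) : Prop :=
  (∀ i, |(A *ᵥ m) i - (if i = a then (1 : ℝ) else 0)| ≤ μ) ∧ ∑ i, |m i| ≤ L

variable {A μ L a}

theorem le_fval {c : ℝ} (hne : ∃ m, IsFeasible A μ L a m)
    (h : ∀ m, IsFeasible A μ L a m → c ≤ m ⬝ᵥ A *ᵥ m) : c ≤ fval A μ L a := by
  obtain ⟨m, hm⟩ := hne
  refine le_csInf ⟨_, m, hm.1, hm.2, rfl⟩ ?_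
  rintro _ ⟨m', hfit, hnorm, rfl⟩
  exact h m' ⟨hfit, hnorm⟩

theorem fval_le {c : ℝ} (h : ∀ m, IsFeasible A μ L a m → c ≤ m ⬝ᵥ A *ᵥ m) {m : Fin p → ℝ}
    (hm : IsFeasible A μ L a m) : fval A μ L a ≤ m ⬝ᵥ A *ᵥ m := by
  refine csInf_le ⟨c, ?_⟩ ⟨m, hm.1, hm.2, rfl⟩
  rintro _ ⟨m', hfit, hnorm, rfl⟩
  exact h m' ⟨hfit, hnorm⟩

theorem isFeasible_inv_mulVec_single_one (hA : IsUnit A.det) (hμ : 0 ≤ μ)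
    (hinv : ∑ i, |A⁻¹ i a| ≤ L) : IsFeasible A μ L a (A⁻¹ *ᵥ Pi.single a 1) := by
  refine ⟨fun i => ?_, by simpa using hinv⟩
  rw [mulVec_inv_mulVec hA, Pi.single_apply, sub_self, abs_zero]
  exact hμ

theorem IsFeasible.one_sub_le_mulVec_apply {m : Fin p → ℝ} (hm : IsFeasible A μ L a m) :
    1 - μ ≤ (A *ᵥ m) a := by
  have := (abs_le.mp (hm.1 a)).1
  rw [if_pos rfl] at this
  linarith

theorem IsFeasible.div_le_dotProduct_mulVec {m : Fin p → ℝ} {lmax : ℝ}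
    (hm : IsFeasible A μ L a m) (hA : A.PosSemidef) (hμ : μ ≤ 1) (hlmax : 0 < lmax)
    (hAa : A a a ≤ lmax) : (1 - μ) ^ 2 / lmax ≤ m ⬝ᵥ A *ᵥ m := by
  rw [div_le_iff₀ hlmax]
  calc (1 - μ) ^ 2 ≤ (A *ᵥ m) a ^ 2 := pow_le_pow_left₀ (by linarith) hm.one_sub_le_mulVec_apply 2
    _ ≤ A a a * (m ⬝ᵥ A *ᵥ m) := hA.sq_mulVec_apply_le m a
    _ ≤ lmax * (m ⬝ᵥ A *ᵥ m) := by
      gcongr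
      simpa using hA.dotProduct_mulVec_nonneg m
    _ = _ := mul_comm _ _

end Feasibility

theorem stmt_4_general {p : ℕ} (A : Matrix (Fin p) (Fin p) ℝ) (hA : A.PosDef)
    (μ L : ℝ) (hμ0 : 0 < μ) (hμ1 : μ < 1) (a : Fin p)
    (hinv : ∀ j, ∑ i, |A⁻¹ i j| ≤ L)
    (lmin lmax : ℝ) (hlminpos : 0 < lmin)
    (hlmin : ∀ v : Fin p → ℝ, lmin * ∑ i, (v i) ^ 2 ≤ v ⬝ᵥ A.mulVec v)
    (hlmax : ∀ v : Fin p → ℝ, v ⬝ᵥ A.mulVec v ≤ lmax * ∑ i, (v i) ^ 2) :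
    (1 - μ) ^ 2 / lmax ≤ fval A μ L a ∧ fval A μ L a ≤ 1 / lmin := by
  have hdet : IsUnit A.det := isUnit_iff_ne_zero.mpr hA.det_pos.ne'
  have hAa : A a a ≤ lmax := by simpa [Pi.single_apply] using hlmax (Pi.single a 1)
  have hlower (m) (hm : IsFeasible A μ L a m) : (1 - μ) ^ 2 / lmax ≤ m ⬝ᵥ A *ᵥ m :=
    hm.div_le_dotProduct_mulVec hA.posSemidef hμ1.le (hA.diag_pos.trans_le hAa) hAa
  have hm₀ := isFeasible_inv_mulVec_single_one hdet hμ0.le (hinv a)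
  refine ⟨le_fval ⟨_, hm₀⟩ hlower, (fval_le hlower hm₀).trans ?_⟩
  rw [inv_mulVec_single_one_dotProduct_mulVec hdet]
  exact inv_apply_self_le_one_div hdet hlminpos hlmin a

theorem stmt_4 {p : ℕ} (A : Matrix (Fin p) (Fin p) ℝ) (hA : A.PosDef)
    (μ L : ℝ) (hμ0 : 0 < μ) (hμ1 : μ < 1) (hL : 0 < L) (a : Fin p)
    (hinv : ∀ j, ∑ i, |A⁻¹ i j| ≤ L)
    (lmin lmax : ℝ) (hlminpos : 0 < lmin)
    (hlmin : ∀ v : Fin p → ℝ, lmin * ∑ i, (v i) ^ 2 ≤ v ⬝ᵥ A.mulVec v)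
    (hlmax : ∀ v : Fin p → ℝ, v ⬝ᵥ A.mulVec v ≤ lmax * ∑ i, (v i) ^ 2) :
    (1 - μ) ^ 2 / lmax ≤ fval A μ L a ∧ fval A μ L a ≤ 1 / lmin :=
  stmt_4_general A hA μ L hμ0 hμ1 a hinv lmin lmax hlminpos hlmin hlmax
end

section
/- Let Σ̂ be a p×p positive semidefinite matrix, μ > 0, and suppose Ω ∈ ℝ^{p×p} satisfies ‖Σ̂Ωe_a − e_a‖_∞ ≤ μ/2 for a fixed index a, with Ω symmetric. Let m be a minimizer of m ↦ (1/2)mᵀΣ̂m − ⟨m, e_a⟩ + μ‖m‖₁, and let ν = m − Ωe_a and S = supp(Ωe_a). Then ‖ν_{S^c}‖₁ ≤ 3‖ν_S‖₁. -/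
open Finset Matrix
open scoped Classical

/-!
Comparing the objective at the minimizer `m = Ωe_a + ν` with its value at `Ωe_a` gives the basic
inequality `½ νᵀΣ̂ν ≤ ⟨ν, e_a - Σ̂Ωe_a⟩ + μ (‖Ωe_a‖₁ - ‖m‖₁)`. Hölder bounds the linear term by
`(μ/2) ‖ν‖₁`, and since `Ωe_a` vanishes off `S` the penalty difference is at most
`μ (‖ν_S‖₁ - ‖ν_{Sᶜ}‖₁)`. As the left side is nonnegative, `‖ν_{Sᶜ}‖₁ ≤ 3 ‖ν_S‖₁`.
-/

theorem Matrix.IsSymm.dotProduct_mulVec_comm {R n : Type*} [CommSemiring R] [Fintype n]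
    {A : Matrix n n R} (hA : A.IsSymm) (x y : n → R) : x ⬝ᵥ A *ᵥ y = y ⬝ᵥ A *ᵥ x := by
  rw [dotProduct_mulVec, ← mulVec_transpose, hA.eq, dotProduct_comm]

theorem dotProduct_le_mul_sum_abs {R ι : Type*} [CommRing R] [LinearOrder R] [IsOrderedRing R]
    [Fintype ι] {ν r : ι → R} {c : R} (hr : ∀ i, |r i| ≤ c) : ν ⬝ᵥ r ≤ c * ∑ i, |ν i| := by
  rw [mul_sum]
  refine sum_le_sum fun i _ => ?_
  calc ν i * r i ≤ |ν i| * |r i| := (le_abs_self _).trans (abs_mul _ _).le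
    _ ≤ |ν i| * c := mul_le_mul_of_nonneg_left (hr i) (abs_nonneg _)
    _ = c * |ν i| := mul_comm _ _

theorem sum_abs_sub_sum_abs_le_of_support_subset {α ι : Type*} [AddCommGroup α] [LinearOrder α]
    [IsOrderedAddMonoid α] [Fintype ι] [DecidableEq ι] {S : Finset ι} {w : ι → α}
    (hw : ∀ i ∉ S, w i = 0) (m : ι → α) :
    ∑ i, |w i| - ∑ i, |m i| ≤ ∑ i ∈ S, |m i - w i| - ∑ i ∈ Sᶜ, |m i - w i| := by
  rw [← sum_add_sum_compl S (fun i => |w i|), ← sum_add_sum_compl S (fun i => |m i|)]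
  have hw_off : ∑ i ∈ Sᶜ, |w i| = 0 :=
    sum_eq_zero fun i hi => by rw [hw i (mem_compl.mp hi), abs_zero]
  have hm_off : ∑ i ∈ Sᶜ, |m i| = ∑ i ∈ Sᶜ, |m i - w i| :=
    sum_congr rfl fun i hi => by rw [hw i (mem_compl.mp hi), sub_zero]
  have hw_on : ∑ i ∈ S, |w i| ≤ ∑ i ∈ S, |m i| + ∑ i ∈ S, |m i - w i| := by
    rw [← sum_add_distrib]
    exact sum_le_sum fun i _ => by simpa using abs_sub (m i) (m i - w i)
  rw [hw_off, hm_off, add_zero, sub_add_eq_sub_sub]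
  exact sub_le_sub_right (sub_le_iff_le_add'.mpr hw_on) _

noncomputable def lassoObjective {n : Type*} [Fintype n] (Sig : Matrix n n ℝ) (b : n → ℝ) (μ : ℝ)
    (x : n → ℝ) : ℝ :=
  (1 / 2) * (x ⬝ᵥ Sig *ᵥ x) - x ⬝ᵥ b + μ * ∑ i, |x i|

theorem lassoObjective_basic_inequality {n : Type*} [Fintype n] {Sig : Matrix n n ℝ}
    (hSig : Sig.IsSymm) {b : n → ℝ} {μ : ℝ} {m : n → ℝ}
    (hm : ∀ x, lassoObjective Sig b μ m ≤ lassoObjective Sig b μ x) (w : n → ℝ) :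
    (1 / 2) * ((m - w) ⬝ᵥ Sig *ᵥ (m - w))
      ≤ (m - w) ⬝ᵥ (b - Sig *ᵥ w) + μ * (∑ i, |w i| - ∑ i, |m i|) := by
  have hmw := hm w
  obtain ⟨ν, rfl⟩ : ∃ ν, m = w + ν := ⟨m - w, by abel⟩
  simp only [lassoObjective, add_sub_cancel_left, mulVec_add, dotProduct_add, add_dotProduct,
    dotProduct_sub] at hmw ⊢
  rw [hSig.dotProduct_mulVec_comm w ν] at hmw
  linarith

theorem stmt_14_general {p : ℕ} (Sig : Matrix (Fin p) (Fin p) ℝ) (hSig : Sig.PosSemidef)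
    (μ : ℝ) (hμ : 0 < μ) (Om : Matrix (Fin p) (Fin p) ℝ) (a : Fin p)
    (hcol : ∀ i, |Sig.mulVec (fun j => Om j a) i - (if i = a then (1 : ℝ) else 0)| ≤ μ / 2)
    (m : Fin p → ℝ)
    (hm : ∀ m' : Fin p → ℝ,
      (1 / 2) * (m ⬝ᵥ Sig.mulVec m) - m a + μ * ∑ i, |m i|
        ≤ (1 / 2) * (m' ⬝ᵥ Sig.mulVec m') - m' a + μ * ∑ i, |m' i|) :
    ∑ i ∈ (Finset.univ.filter (fun i => Om i a ≠ 0))ᶜ, |m i - Om i a|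
      ≤ 3 * ∑ i ∈ Finset.univ.filter (fun i => Om i a ≠ 0), |m i - Om i a| := by
  set S := univ.filter (fun i => Om i a ≠ 0)
  set w : Fin p → ℝ := fun j => Om j a
  have hmin : ∀ x, lassoObjective Sig (Pi.single a 1) μ m
      ≤ lassoObjective Sig (Pi.single a 1) μ x := by
    simpa only [lassoObjective, dotProduct_single_one] using hm
  have hbasic :=
    lassoObjective_basic_inequality (isHermitian_iff_isSymm.mp hSig.isHermitian) hmin w
  have hholder : (m - w) ⬝ᵥ (Pi.single a 1 - Sig *ᵥ w) ≤ μ / 2 * ∑ i, |(m - w) i| :=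
    dotProduct_le_mul_sum_abs fun i => by
      simpa [abs_sub_comm, Pi.single_apply] using hcol i
  have hpenalty := sum_abs_sub_sum_abs_le_of_support_subset (S := S) (w := w) (by simp [S, w]) m
  have hquad : 0 ≤ (m - w) ⬝ᵥ Sig *ᵥ (m - w) := by
    simpa using hSig.dotProduct_mulVec_nonneg (m - w)
  rw [← sum_add_sum_compl S] at hholder
  have hcone : μ * ∑ i ∈ Sᶜ, |m i - w i| ≤ μ * (3 * ∑ i ∈ S, |m i - w i|) := by
    have hpenaltyμ := mul_le_mul_of_nonneg_left hpenalty hμ.le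
    simp only [Pi.sub_apply] at hholder
    linarith
  exact le_of_mul_le_mul_left hcone hμ

theorem stmt_14 {p : ℕ} (Sig : Matrix (Fin p) (Fin p) ℝ) (hSig : Sig.PosSemidef)
    (μ : ℝ) (hμ : 0 < μ) (Om : Matrix (Fin p) (Fin p) ℝ) (hOm : Om.IsSymm) (a : Fin p)
    (hcol : ∀ i, |Sig.mulVec (fun j => Om j a) i - (if i = a then (1 : ℝ) else 0)| ≤ μ / 2)
    (m : Fin p → ℝ)
    (hm : ∀ m' : Fin p → ℝ,
      (1 / 2) * (m ⬝ᵥ Sig.mulVec m) - m a + μ * ∑ i, |m i|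
        ≤ (1 / 2) * (m' ⬝ᵥ Sig.mulVec m') - m' a + μ * ∑ i, |m' i|) :
    ∑ i ∈ (Finset.univ.filter (fun i => Om i a ≠ 0))ᶜ, |m i - Om i a|
      ≤ 3 * ∑ i ∈ Finset.univ.filter (fun i => Om i a ≠ 0), |m i - Om i a| :=
  stmt_14_general Sig hSig μ hμ Om a hcol m hm
end
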